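/- arXiv:1811.01587 — 5 statements merged into one kernel-verified Lean document; each statement's English description precedes it below -/
import Mathlib

section
/- Let E and F be real inner product spaces, f : E → ℝ, g : F → ℝ, H : E × F → ℝ, and define Ψ(x, y) = f(x) + g(y) + H(x, y). Fix η₁, η₂ > 0 and C_x, C_y ≥ 0. Let x^{t−1}, x^t, x^{t+1} ∈ E, y^{t−1}, y^t, y^{t+1} ∈ F and error vectors e_x ∈ E, e_y ∈ F satisfy ‖e_x‖ ≤ C_x‖x^t − x^{t−1}‖ and ‖e_y‖ ≤ C_y‖y^t − y^{t−1}‖. Assume the two task-embedded comparison inequalities: f(x^{t+1}) + H(x^{t+1}, y^t) + (η₁/2)‖x^{t+1} − x^t‖² − ⟨e_x, x^{t+1}⟩ ≤ f(x^t) + H(x^t, y^t) − ⟨e_x, x^t⟩, and g(y^{t+1}) + H(x^{t+1}, y^{t+1}) + (η₂/2)‖y^{t+1} − y^t‖² − ⟨e_y, y^{t+1}⟩ ≤ g(y^t) + H(x^{t+1}, y^t) − ⟨e_y, y^t⟩. Define Φ(x, y, p, q) = Ψ(x, y) + (C_x²/η₁)‖x − p‖² + (C_y²/η₂)‖y − q‖².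 Then Φ(x^t, y^t, x^{t−1}, y^{t−1}) − Φ(x^{t+1}, y^{t+1}, x^t, y^t) ≥ (η₁/4 − C_x²/η₁)‖x^{t+1} − x^t‖² + (η₂/4 − C_y²/η₂)‖y^{t+1} − y^t‖². -/
/-!
Each block step decreases its partial objective by `η/4 ‖step‖²` up to the error cost
`C²/η ‖previous step‖²`. Adding the two block estimates, the error costs are exactly the
memory terms of `Φ` at time `t`, and `Φ` at time `t + 1` charges `C²/η ‖step‖²` in their place.
-/

open scoped RealInnerProductSpace

lemma mul_le_sq_div_add_mul_sq {a b c : ℝ} (hc : 0 < c) : a * b ≤ a ^ 2 / c + c / 4 * b ^ 2 := by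
  have hsq : 0 ≤ (2 * a - c * b) ^ 2 / (4 * c) := by positivity
  have hexpand : (2 * a - c * b) ^ 2 / (4 * c) = a ^ 2 / c + c / 4 * b ^ 2 - a * b := by
    field_simp
    ring
  linarith

section InexactProximal

variable {E : Type*} [NormedAddCommGroup E] [InnerProductSpace ℝ E]

lemma real_inner_le_sq_div_add_of_norm_le {e : E} {a η : ℝ} (hη : 0 < η) (he : ‖e‖ ≤ a)
    (d : E) : ⟪e, d⟫ ≤ a ^ 2 / η + η / 4 * ‖d‖ ^ 2 :=
  calc ⟪e, d⟫ ≤ ‖e‖ * ‖d‖ := real_inner_le_norm e d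
    _ ≤ a * ‖d‖ := mul_le_mul_of_nonneg_right he (norm_nonneg d)
    _ ≤ a ^ 2 / η + η / 4 * ‖d‖ ^ 2 := mul_le_sq_div_add_mul_sq hη

-- Young's inequality absorbs the error term into half of the proximal term.
lemma inexact_prox_step_descent {φ : E → ℝ} {u p e : E} {a η : ℝ} (hη : 0 < η) (he : ‖e‖ ≤ a)
    (hcomp : φ p + η / 2 * ‖p - u‖ ^ 2 - ⟪e, p⟫ ≤ φ u - ⟪e, u⟫) :
    φ p + η / 4 * ‖p - u‖ ^ 2 ≤ φ u + a ^ 2 / η := by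
  have herr := real_inner_le_sq_div_add_of_norm_le hη he (p - u)
  rw [inner_sub_right] at herr
  linarith

end InexactProximal

theorem tecu_descent_case_3_6_general
    {E F : Type*} [NormedAddCommGroup E] [InnerProductSpace ℝ E]
    [NormedAddCommGroup F] [InnerProductSpace ℝ F]
    (f : E → ℝ) (g : F → ℝ) (H : E × F → ℝ)
    (Ψ : E → F → ℝ) (hΨ : ∀ x y, Ψ x y = f x + g y + H (x, y))
    (η₁ η₂ Cx Cy : ℝ) (hη₁ : 0 < η₁) (hη₂ : 0 < η₂)
    (xm x xp : E) (ym y yp : F) (ex : E) (ey : F)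
    (hex : ‖ex‖ ≤ Cx * ‖x - xm‖) (hey : ‖ey‖ ≤ Cy * ‖y - ym‖)
    (hcompx : f xp + H (xp, y) + (η₁ / 2) * ‖xp - x‖ ^ 2 - ⟪ex, xp⟫
        ≤ f x + H (x, y) - ⟪ex, x⟫)
    (hcompy : g yp + H (xp, yp) + (η₂ / 2) * ‖yp - y‖ ^ 2 - ⟪ey, yp⟫
        ≤ g y + H (xp, y) - ⟪ey, y⟫)
    (Φ : E → F → E → F → ℝ)
    (hΦ : ∀ x' y' p q, Φ x' y' p q
        = Ψ x' y' + (Cx ^ 2 / η₁) * ‖x' - p‖ ^ 2 + (Cy ^ 2 / η₂) * ‖y' - q‖ ^ 2) :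
    Φ x y xm ym - Φ xp yp x y
      ≥ (η₁ / 4 - Cx ^ 2 / η₁) * ‖xp - x‖ ^ 2 + (η₂ / 4 - Cy ^ 2 / η₂) * ‖yp - y‖ ^ 2 := by
  have hdescx := inexact_prox_step_descent (φ := fun x' => f x' + H (x', y)) hη₁ hex hcompx
  have hdescy := inexact_prox_step_descent (φ := fun y' => g y' + H (xp, y')) hη₂ hey hcompy
  rw [mul_pow, mul_div_right_comm] at hdescx hdescy
  rw [hΦ, hΦ, hΨ, hΨ]
  linarith

/-- Sufficient-descent inequality (Proposition 2, TECU case "3-6"):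
both blocks updated by task-embedded inexact proximal steps. -/
theorem tecu_descent_case_3_6
    {E F : Type*} [NormedAddCommGroup E] [InnerProductSpace ℝ E]
    [NormedAddCommGroup F] [InnerProductSpace ℝ F]
    (f : E → ℝ) (g : F → ℝ) (H : E × F → ℝ)
    (Ψ : E → F → ℝ) (hΨ : ∀ x y, Ψ x y = f x + g y + H (x, y))
    (η₁ η₂ Cx Cy : ℝ) (hη₁ : 0 < η₁) (hη₂ : 0 < η₂) (hCx : 0 ≤ Cx) (hCy : 0 ≤ Cy)
    (xm x xp : E) (ym y yp : F) (ex : E) (ey : F)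
    (hex : ‖ex‖ ≤ Cx * ‖x - xm‖) (hey : ‖ey‖ ≤ Cy * ‖y - ym‖)
    (hcompx : f xp + H (xp, y) + (η₁ / 2) * ‖xp - x‖ ^ 2 - ⟪ex, xp⟫
        ≤ f x + H (x, y) - ⟪ex, x⟫)
    (hcompy : g yp + H (xp, yp) + (η₂ / 2) * ‖yp - y‖ ^ 2 - ⟪ey, yp⟫
        ≤ g y + H (xp, y) - ⟪ey, y⟫)
    (Φ : E → F → E → F → ℝ)
    (hΦ : ∀ x' y' p q, Φ x' y' p q
        = Ψ x' y' + (Cx ^ 2 / η₁) * ‖x' - p‖ ^ 2 + (Cy ^ 2 / η₂) * ‖y' - q‖ ^ 2) :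
    Φ x y xm ym - Φ xp yp x y
      ≥ (η₁ / 4 - Cx ^ 2 / η₁) * ‖xp - x‖ ^ 2 + (η₂ / 4 - Cy ^ 2 / η₂) * ‖yp - y‖ ^ 2 :=
  tecu_descent_case_3_6_general f g H Ψ hΨ η₁ η₂ Cx Cy hη₁ hη₂ xm x xp ym y yp ex ey hex hey hcompx
    hcompy Φ hΦ
end

section
/- Let E be a real normed vector space and Ψ : E → ℝ a function that is bounded below and coercive, meaning Ψ(z) → +∞ as ‖z‖ → +∞ (i.e., Ψ tends to atTop along the filter comap ‖·‖ atTop). Let c > 0. Then the function Φ : E × E → ℝ defined by Φ(z, w) = Ψ(z) + c‖z − w‖² is coercive on the product space: Φ(z, w) → +∞ as ‖(z, w)‖ → +∞. -/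
/-!
If `‖(z, w)‖` is large then so is `‖z‖` or `‖z - w‖`, because `‖w‖ ≤ ‖z‖ + ‖z - w‖`. In the
first case `Ψ z` is large, in the second `c * ‖z - w‖ ^ 2`; since both summands are bounded
below, either one being large makes their sum large. The shear `(z, w) ↦ (z, z - w)` thus
reduces the claim to a sum of coercive functions of separate variables.
-/

open Filter Bornology

theorem tendsto_fst_add_snd_cobounded_atTop {α β G : Type*} [Bornology α] [Bornology β]
    [AddCommGroup G] [PartialOrder G] [IsOrderedAddMonoid G] {f : α → G} {g : β → G}
    {a b : G} (hfa : ∀ x, a ≤ f x) (hgb : ∀ y, b ≤ g y)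
    (hf : Tendsto f (cobounded α) atTop) (hg : Tendsto g (cobounded β) atTop) :
    Tendsto (fun p : α × β => f p.1 + g p.2) (cobounded (α × β)) atTop := by
  rw [cobounded_prod, Filter.coprod, tendsto_sup]
  exact ⟨tendsto_atTop_add_right_of_le _ b (hf.comp tendsto_comap) fun p => hgb p.2,
    tendsto_atTop_add_left_of_le _ a (fun p => hfa p.1) (hg.comp tendsto_comap)⟩

theorem antilipschitzWith_prodMk_fst_sub {E : Type*} [SeminormedAddCommGroup E] :
    AntilipschitzWith 2 fun p : E × E => (p.1, p.1 - p.2) := by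
  refine AddMonoidHomClass.antilipschitz_of_bound
    ((AddMonoidHom.fst E E).prod (AddMonoidHom.fst E E - AddMonoidHom.snd E E)) fun p => ?_
  have hsnd : ‖p.2‖ ≤ ‖p.1‖ + ‖p.1 - p.2‖ := by
    simpa using norm_sub_le p.1 (p.1 - p.2)
  simp only [AddMonoidHom.prod_apply, AddMonoidHom.sub_apply, AddMonoidHom.coe_fst,
    AddMonoidHom.coe_snd, Prod.norm_def, NNReal.coe_ofNat]
  exact max_le (by linarith [le_max_left ‖p.1‖ ‖p.1 - p.2‖, norm_nonneg p.1])
    (by linarith [le_max_left ‖p.1‖ ‖p.1 - p.2‖, le_max_right ‖p.1‖ ‖p.1 - p.2‖])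

theorem lyapunov_coercive_general
    {E : Type*} [NormedAddCommGroup E]
    (Ψ : E → ℝ) (m : ℝ) (hm : ∀ z, m ≤ Ψ z)
    (hcoercive : Tendsto Ψ (comap norm atTop) atTop)
    (c : ℝ) (hc : 0 < c) :
    Tendsto (fun zw : E × E => Ψ zw.1 + c * ‖zw.1 - zw.2‖ ^ 2)
      (comap norm atTop) atTop := by
  rw [comap_norm_atTop] at hcoercive ⊢
  have hquad : Tendsto (fun x : E => c * ‖x‖ ^ 2) (cobounded E) atTop :=
    ((tendsto_pow_atTop two_ne_zero).comp tendsto_norm_cobounded_atTop).const_mul_atTop hc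
  exact (tendsto_fst_add_snd_cobounded_atTop hm (fun x => by positivity) hcoercive hquad).comp
    antilipschitzWith_prodMk_fst_sub.tendsto_cobounded

/-- Coercivity transfer: the Lyapunov function `Φ (z, w) = Ψ z + c * ‖z - w‖ ^ 2`
built from a bounded-below coercive `Ψ` is coercive on the product space. -/
theorem lyapunov_coercive
    {E : Type*} [NormedAddCommGroup E] [NormedSpace ℝ E]
    (Ψ : E → ℝ) (m : ℝ) (hm : ∀ z, m ≤ Ψ z)
    (hcoercive : Tendsto Ψ (comap norm atTop) atTop)
    (c : ℝ) (hc : 0 < c) :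
    Tendsto (fun zw : E × E => Ψ zw.1 + c * ‖zw.1 - zw.2‖ ^ 2)
      (comap norm atTop) atTop :=
  lyapunov_coercive_general Ψ m hm hcoercive c hc
end

section
/- Let E and F be real inner product spaces and let G_x : E × F → E satisfy the Lipschitz bound ‖G_x(x, y) − G_x(x, y')‖ ≤ M‖y − y'‖ for all x ∈ E, y, y' ∈ F, where M ≥ 0. Fix constants η₁, η₂ > 0 and C_x, C_y ≥ 0. Let x^{t−2}, x^{t−1}, x^t ∈ E, y^{t−2}, y^{t−1}, y^t ∈ F and error vectors e_x ∈ E, e_y ∈ F satisfy ‖e_x‖ ≤ C_x‖x^{t−1} − x^{t−2}‖ and ‖e_y‖ ≤ C_y‖y^{t−1} − y^{t−2}‖. For s ∈ {t−1, t}, write D_s = (‖x^s − x^{s−1}‖² + ‖y^s − y^{s−1}‖²)^{1/2}. Then, with b = max{M + η₁ + η₂ + 4C_x²/η₁ + 4C_y²/η₂, C_x + C_y}, the following bound holds: ‖G_x(x^t, y^t) − G_x(x^t, y^{t−1}) + η₁(x^{t−1} − x^t) + e_x + (2C_x²/η₁)(x^t − x^{t−1})‖ + ‖e_y + η₂(y^{t−1}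 − y^t) + (2C_y²/η₂)(y^t − y^{t−1})‖ + ‖(2C_x²/η₁)(x^{t−1} − x^t)‖ + ‖(2C_y²/η₂)(y^{t−1} − y^t)‖ ≤ b(D_t + D_{t−1}). -/
/-! Every term on the left is a sum of multiples of the four step lengths `‖x - xm‖`, `‖y - ym‖`
(each at most `D_t`) and `‖xm - xmm‖`, `‖ym - ymm‖` (each at most `D_{t-1}`): the Lipschitz bound
and the triangle inequality handle the current step, Criterion 1 the errors. Collecting
coefficients gives `(M + η₁ + η₂ + 4Cx²/η₁ + 4Cy²/η₂) D_t + (Cx + Cy) D_{t-1}`, and both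
coefficients are at most their maximum. -/

theorem le_rpow_half_sq_add_sq_left (a b : ℝ) : a ≤ (a ^ 2 + b ^ 2) ^ ((1 : ℝ) / 2) := by
  rw [← Real.sqrt_eq_rpow]
  exact Real.le_sqrt_of_sq_le (le_add_of_nonneg_right (sq_nonneg b))

theorem le_rpow_half_sq_add_sq_right (a b : ℝ) : b ≤ (a ^ 2 + b ^ 2) ^ ((1 : ℝ) / 2) := by
  rw [add_comm]
  exact le_rpow_half_sq_add_sq_left b a

theorem mul_add_mul_le_max_mul_add {R : Type*} [Semiring R] [LinearOrder R] [IsOrderedRing R]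
    (p q : R) {u v : R} (hu : 0 ≤ u) (hv : 0 ≤ v) : p * u + q * v ≤ max p q * (u + v) := by
  rw [mul_add]
  gcongr
  exacts [le_max_left p q, le_max_right p q]

/-- Bounded-subgradient estimate (Eq. (7b)) for the TECU case "3-6". -/
theorem tecu_bounded_subgradient_case_3_6
    {E F : Type*} [NormedAddCommGroup E] [InnerProductSpace ℝ E]
    [NormedAddCommGroup F] [InnerProductSpace ℝ F]
    (Gx : E × F → E) (M : ℝ) (hM : 0 ≤ M)
    (hLip : ∀ (x : E) (y y' : F), ‖Gx (x, y) - Gx (x, y')‖ ≤ M * ‖y - y'‖)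
    (η₁ η₂ Cx Cy : ℝ) (hη₁ : 0 < η₁) (hη₂ : 0 < η₂) (hCx : 0 ≤ Cx) (hCy : 0 ≤ Cy)
    (xmm xm x : E) (ymm ym y : F) (ex : E) (ey : F)
    (hex : ‖ex‖ ≤ Cx * ‖xm - xmm‖) (hey : ‖ey‖ ≤ Cy * ‖ym - ymm‖) :
    ‖Gx (x, y) - Gx (x, ym) + η₁ • (xm - x) + ex + (2 * Cx ^ 2 / η₁) • (x - xm)‖
      + ‖ey + η₂ • (ym - y) + (2 * Cy ^ 2 / η₂) • (y - ym)‖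
      + ‖(2 * Cx ^ 2 / η₁) • (xm - x)‖
      + ‖(2 * Cy ^ 2 / η₂) • (ym - y)‖
      ≤ max (M + η₁ + η₂ + 4 * Cx ^ 2 / η₁ + 4 * Cy ^ 2 / η₂) (Cx + Cy)
        * ((‖x - xm‖ ^ 2 + ‖y - ym‖ ^ 2) ^ ((1 : ℝ) / 2)
          + (‖xm - xmm‖ ^ 2 + ‖ym - ymm‖ ^ 2) ^ ((1 : ℝ) / 2)) := by
  set c₁ := 2 * Cx ^ 2 / η₁
  set c₂ := 2 * Cy ^ 2 / η₂
  set Dt := (‖x - xm‖ ^ 2 + ‖y - ym‖ ^ 2) ^ ((1 : ℝ) / 2)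
  set Dm := (‖xm - xmm‖ ^ 2 + ‖ym - ymm‖ ^ 2) ^ ((1 : ℝ) / 2)
  have hc₁ : 0 ≤ c₁ := by positivity
  have hc₂ : 0 ≤ c₂ := by positivity
  have hx_Dt : ‖xm - x‖ ≤ Dt := norm_sub_rev x xm ▸ le_rpow_half_sq_add_sq_left _ _
  have hy_Dt : ‖ym - y‖ ≤ Dt := norm_sub_rev y ym ▸ le_rpow_half_sq_add_sq_right _ _
  have hex_Dm : ‖ex‖ ≤ Cx * Dm := hex.trans (by gcongr; exact le_rpow_half_sq_add_sq_left _ _)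
  have hey_Dm : ‖ey‖ ≤ Cy * Dm := hey.trans (by gcongr; exact le_rpow_half_sq_add_sq_right _ _)
  have hx_block : ‖Gx (x, y) - Gx (x, ym) + η₁ • (xm - x) + ex + c₁ • (x - xm)‖
      ≤ M * Dt + η₁ * Dt + Cx * Dm + c₁ * Dt := by
    refine (norm_add₄_le).trans ?_
    rw [norm_smul_of_nonneg hη₁.le, norm_smul_of_nonneg hc₁, norm_sub_rev x]
    gcongr
    exact (hLip x y ym).trans (by rw [norm_sub_rev]; gcongr)
  have hy_block : ‖ey + η₂ • (ym - y) + c₂ • (y - ym)‖ ≤ Cy * Dm + η₂ * Dt + c₂ * Dt := by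
    refine (norm_add₃_le).trans ?_
    rw [norm_smul_of_nonneg hη₂.le, norm_smul_of_nonneg hc₂, norm_sub_rev y]
    gcongr
  have hx_corr : ‖c₁ • (xm - x)‖ ≤ c₁ * Dt := by rw [norm_smul_of_nonneg hc₁]; gcongr
  have hy_corr : ‖c₂ • (ym - y)‖ ≤ c₂ * Dt := by rw [norm_smul_of_nonneg hc₂]; gcongr
  calc _ ≤ (M + η₁ + η₂ + 4 * Cx ^ 2 / η₁ + 4 * Cy ^ 2 / η₂) * Dt + (Cx + Cy) * Dm := by
        have hc₁_double : 4 * Cx ^ 2 / η₁ = 2 * c₁ := by ring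
        have hc₂_double : 4 * Cy ^ 2 / η₂ = 2 * c₂ := by ring
        rw [hc₁_double, hc₂_double]
        linarith
    _ ≤ _ := mul_add_mul_le_max_mul_add _ _ (by positivity) (by positivity)
end

section
/- Let μ > 0 and let φ : ℝ → ℝ be concave on the interval [0, μ) and differentiable at every point of (0, μ). Let a > 0, b > 0, and let reals r, r⁺, s, d₀, d₁, d₂ satisfy: 0 ≤ r⁺ ≤ r < μ, r > 0, d₀ ≥ 0, d₁ ≥ 0, d₂ ≥ 0, the descent bound r − r⁺ ≥ a·d₀², the subgradient bound 0 < s ≤ b(d₁ + d₂), and the Kurdyka–Łojasiewicz inequality φ'(r)·s ≥ 1. Then d₀² ≤ (b/a)·(φ(r) − φ(r⁺))·(d₁ + d₂). -/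
/-!
Concavity of `φ` bounds the Lyapunov decrease from below by the tangent at `r`:
`φ r - φ r⁺ ≥ φ'(r) (r - r⁺)`. Chaining the sufficient descent `a d₀² ≤ r - r⁺`, the
KL inequality `1 ≤ φ'(r) s` and the subgradient bound `s ≤ b (d₁ + d₂)` gives
`a d₀² ≤ φ'(r) s (r - r⁺) ≤ s (φ r - φ r⁺) ≤ b (d₁ + d₂) (φ r - φ r⁺)`.
-/

theorem ConcaveOn.deriv_mul_sub_le_sub {S : Set ℝ} {f : ℝ → ℝ} {x y : ℝ}
    (hf : ConcaveOn ℝ S f) (hx : x ∈ S) (hy : y ∈ S) (hxy : x ≤ y)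
    (hd : DifferentiableAt ℝ f y) :
    deriv f y * (y - x) ≤ f y - f x := by
  rcases hxy.eq_or_lt with rfl | hlt
  · simp
  · have hslope := hf.deriv_le_slope hx hy hlt hd
    rwa [slope_def_field, le_div_iff₀ (sub_pos.2 hlt)] at hslope

theorem le_mul_div_of_descent_of_kl {a s g B e Δr Δφ : ℝ} (ha : 0 < a) (hs : 0 < s)
    (hΔr : 0 ≤ Δr) (hdesc : a * e ≤ Δr) (hslope : g * Δr ≤ Δφ) (hkl : 1 ≤ g * s)
    (hsB : s ≤ B) :
    e ≤ Δφ * B / a := by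
  have hg : 0 < g := pos_of_mul_pos_left (one_pos.trans_le hkl) hs.le
  have hΔφ : 0 ≤ Δφ := (mul_nonneg hg.le hΔr).trans hslope
  rw [le_div_iff₀ ha]
  calc e * a = a * e := mul_comm e a
    _ ≤ Δr := hdesc
    _ ≤ g * s * Δr := le_mul_of_one_le_left hΔr hkl
    _ = s * (g * Δr) := by ring
    _ ≤ s * Δφ := mul_le_mul_of_nonneg_left hslope hs.le
    _ ≤ B * Δφ := mul_le_mul_of_nonneg_right hsB hΔφ
    _ = Δφ * B := mul_comm B Δφ

theorem tecu_kl_chain_inequality_general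
    (μ : ℝ) (φ : ℝ → ℝ)
    (hconc : ConcaveOn ℝ (Set.Ico (0 : ℝ) μ) φ)
    (hdiff : ∀ x ∈ Set.Ioo (0 : ℝ) μ, DifferentiableAt ℝ φ x)
    (a b : ℝ) (ha : 0 < a)
    (r rp s d₀ d₁ d₂ : ℝ)
    (hrp : 0 ≤ rp) (hrpr : rp ≤ r) (hrμ : r < μ) (hr : 0 < r)
    (hdesc : r - rp ≥ a * d₀ ^ 2)
    (hs : 0 < s) (hsb : s ≤ b * (d₁ + d₂))
    (hkl : deriv φ r * s ≥ 1) :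
    d₀ ^ 2 ≤ (b / a) * (φ r - φ rp) * (d₁ + d₂) := by
  have htangent : deriv φ r * (r - rp) ≤ φ r - φ rp :=
    hconc.deriv_mul_sub_le_sub ⟨hrp, hrpr.trans_lt hrμ⟩ ⟨hr.le, hrμ⟩ hrpr (hdiff r ⟨hr, hrμ⟩)
  calc d₀ ^ 2 ≤ (φ r - φ rp) * (b * (d₁ + d₂)) / a :=
        le_mul_div_of_descent_of_kl ha hs (sub_nonneg.2 hrpr) hdesc htangent hkl hsb
    _ = (b / a) * (φ r - φ rp) * (d₁ + d₂) := by ring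

/-- The key Kurdyka–Łojasiewicz chain inequality in the proof of Theorem 1 of TECU. -/
theorem tecu_kl_chain_inequality
    (μ : ℝ) (hμ : 0 < μ) (φ : ℝ → ℝ)
    (hconc : ConcaveOn ℝ (Set.Ico (0 : ℝ) μ) φ)
    (hdiff : ∀ x ∈ Set.Ioo (0 : ℝ) μ, DifferentiableAt ℝ φ x)
    (a b : ℝ) (ha : 0 < a) (hb : 0 < b)
    (r rp s d₀ d₁ d₂ : ℝ)
    (hrp : 0 ≤ rp) (hrpr : rp ≤ r) (hrμ : r < μ) (hr : 0 < r)
    (hd₀ : 0 ≤ d₀) (hd₁ : 0 ≤ d₁) (hd₂ : 0 ≤ d₂)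
    (hdesc : r - rp ≥ a * d₀ ^ 2)
    (hs : 0 < s) (hsb : s ≤ b * (d₁ + d₂))
    (hkl : deriv φ r * s ≥ 1) :
    d₀ ^ 2 ≤ (b / a) * (φ r - φ rp) * (d₁ + d₂) :=
  tecu_kl_chain_inequality_general μ φ hconc hdiff a b ha r rp s d₀ d₁ d₂ hrp hrpr hrμ hr hdesc hs
    hsb hkl
end

section
/- Let d : ℕ → ℝ be a nonnegative sequence, φ : ℕ → ℝ a nonnegative nonincreasing sequence, μ ≥ 0 a real constant, and T ∈ ℕ. Suppose that for all t > T the inequality d(t+1)² ≤ μ·(φ(t) − φ(t+1))·(d(t) + d(t−1)) holds. Then the sequence d is summable: ∑_{t=0}^∞ d(t) < ∞. -/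
/-!
Squaring out the recursion with the arithmetic–geometric mean inequality gives the linear
relation `4 d(t+1) ≤ d(t) + d(t-1) + 4μ (φ(t) - φ(t+1))`. Along it the quantity
`4 S(n+2) - S(n+1) - S(n) + 4μ φ(n+1)`, with `S` the partial sums of `d`, is nonincreasing,
and it dominates `2 S(n+2)`; hence the partial sums are bounded.
-/

open Finset

theorem four_mul_le_add_of_sq_le_mul {a x ε : ℝ} (h : a ^ 2 ≤ ε * x) (hx : 0 ≤ x + 4 * ε) :
    4 * a ≤ x + 4 * ε := by
  nlinarith [sq_nonneg (x - 4 * ε), sq_nonneg (4 * a - (x + 4 * ε))]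

theorem summable_of_four_mul_le_add_add_sub {d ψ : ℕ → ℝ} (hd : ∀ n, 0 ≤ d n) (hψ : ∀ n, 0 ≤ ψ n)
    (h : ∀ n, 4 * d (n + 2) ≤ d (n + 1) + d n + (ψ n - ψ (n + 1))) :
    Summable d := by
  set S : ℕ → ℝ := fun n => ∑ t ∈ range n, d t
  have hS_succ (n : ℕ) : S (n + 1) = S n + d n := sum_range_succ d n
  have hS_mono : Monotone S := fun m n hmn =>
    sum_le_sum_of_subset_of_nonneg (range_subset_range.2 hmn) fun i _ _ => hd i
  set W : ℕ → ℝ := fun n => 4 * S (n + 2) - S (n + 1) - S n + ψ n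
  have hW_anti : Antitone W := antitone_nat_of_succ_le fun n => by
    have := h n
    simp only [W, hS_succ (n + 2), hS_succ (n + 1), hS_succ n] at this ⊢
    linarith
  have hS_le_W (n : ℕ) : 2 * S (n + 2) ≤ W n := by
    have := hS_mono (Nat.le_succ (n + 1))
    have := hS_mono (Nat.le_add_right n 2)
    have := hψ n
    linarith
  refine summable_of_sum_range_le hd (c := W 0 / 2) fun n => ?_
  have := hS_mono (Nat.le_add_right n 2)
  have := hS_le_W n
  have := hW_anti (Nat.zero_le n)
  change S n ≤ W 0 / 2
  linarith

/-- Finite-length argument in the proof of Theorem 1 of TECU: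
the recursive gap inequality implies summability of the gaps. -/
theorem tecu_gaps_summable
    (d : ℕ → ℝ) (hd : ∀ t, 0 ≤ d t)
    (φ : ℕ → ℝ) (hφ : ∀ t, 0 ≤ φ t) (hmono : Antitone φ)
    (μ : ℝ) (hμ : 0 ≤ μ) (T : ℕ)
    (hrec : ∀ t : ℕ, T < t → d (t + 1) ^ 2 ≤ μ * (φ t - φ (t + 1)) * (d t + d (t - 1))) :
    Summable d := by
  refine (summable_nat_add_iff T).mp <|
    summable_of_four_mul_le_add_add_sub (ψ := fun n => 4 * μ * φ (n + T + 1))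
      (fun n => hd _) (fun n => mul_nonneg (by positivity) (hφ _)) fun n => ?_
  have hgap : 0 ≤ μ * (φ (n + T + 1) - φ (n + T + 2)) :=
    mul_nonneg hμ (sub_nonneg.2 (hmono (Nat.le_succ _)))
  have hrec' := hrec (n + T + 1) (by omega)
  rw [Nat.add_sub_cancel] at hrec'
  have hamgm := four_mul_le_add_of_sq_le_mul hrec' (by linarith [hd (n + T + 1), hd (n + T)])
  simp only [show n + 2 + T = n + T + 1 + 1 by omega, show n + 1 + T = n + T + 1 by omega]
  linarith
end
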